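/- If X and Y are independent random variables each exponentially distributed with rate 1, then for every g > 0, P(X·Y ≤ g) = 1 - 2√g · K₁(2√g), where K₁ is the modified Bessel function of the second kind of order 1. -/

import Mathlib

open Real MeasureTheory ProbabilityTheory Set

/-- Modified Bessel function of the second kind of order 1 (integral representation). -/
noncomputable def besselK1 (x : ℝ) : ℝ :=
  ∫ t in Set.Ioi (0 : ℝ), Real.exp (-x * Real.cosh t) * Real.cosh t

/-! For `x > 0`, conditioning on `X = x` gives `P(X * Y > g) = ∫₀^∞ e^{-x} e^{-g/x} dx`. The
substitution `x = √g e^t` turns `x + g / x` into `2√g cosh t`, and since `cosh` is the even part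
of `exp`, the resulting integral over `ℝ` is twice the integral defining `K₁(2√g)`. -/

theorem integral_comp_exp {E : Type*} [NormedAddCommGroup E] [NormedSpace ℝ E] (f : ℝ → E) :
    ∫ t, exp t • f (exp t) = ∫ x in Ioi 0, f x := by
  rw [← Real.range_exp, ← image_univ, integral_image_eq_integral_abs_deriv_smul MeasurableSet.univ
    (fun t _ ↦ (hasDerivAt_exp t).hasDerivWithinAt) exp_injective.injOn, setIntegral_univ]
  simp_rw [abs_of_pos (exp_pos _)]

theorem integrable_comp_exp_iff {E : Type*} [NormedAddCommGroup E] [NormedSpace ℝ E]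
    (f : ℝ → E) : Integrable (fun t ↦ exp t • f (exp t)) ↔ IntegrableOn f (Ioi 0) := by
  rw [← Real.range_exp, ← image_univ, integrableOn_image_iff_integrableOn_abs_deriv_smul
    MeasurableSet.univ (fun t _ ↦ (hasDerivAt_exp t).hasDerivWithinAt) exp_injective.injOn,
    integrableOn_univ]
  simp_rw [abs_of_pos (exp_pos _)]

theorem integral_exp_mul_of_even {h : ℝ → ℝ} (h_even : h.Even)
    (hint : Integrable fun t ↦ exp t * h t) :
    ∫ t, exp t * h t = 2 * ∫ t in Ioi 0, cosh t * h t := by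
  have hint_neg : Integrable fun t ↦ exp (-t) * h t := by
    simpa only [h_even.eq] using hint.comp_neg
  have hsymm : ∫ t, exp (-t) * h t = ∫ t, exp t * h t := by
    simpa only [neg_neg, h_even.eq] using (integral_neg_eq_self (fun t ↦ exp (-t) * h t) volume).symm
  have hcosh : ∫ t, cosh t * h t = ((∫ t, exp t * h t) + ∫ t, exp (-t) * h t) / 2 := by
    rw [← integral_add hint hint_neg, ← integral_div]
    congr 1 with t
    rw [cosh_eq]
    ring
  have habs : ∀ t, cosh |t| * h |t| = cosh t * h t := fun t ↦ by
    rcases abs_choice t with ht | ht <;> simp only [ht, cosh_neg, h_even.eq]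
  rw [← integral_comp_abs (f := fun t ↦ cosh t * h t)]
  simp only [habs]
  linarith

theorem integrableOn_exp_neg_add_div {g : ℝ} (hg : 0 ≤ g) :
    IntegrableOn (fun x ↦ exp (-(x + g / x))) (Ioi 0) := by
  refine (exp_neg_integrableOn_Ioi 0 one_pos).mono' (by fun_prop) ?_
  filter_upwards [ae_restrict_mem measurableSet_Ioi] with x hx
  rw [norm_of_nonneg (exp_pos _).le, neg_one_mul, exp_le_exp]
  have hgx : 0 ≤ g / x := div_nonneg hg (le_of_lt hx)
  linarith

theorem integral_exp_neg_add_div {g : ℝ} (hg : 0 < g) :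
    ∫ x in Ioi 0, exp (-(x + g / x)) = 2 * √g * besselK1 (2 * √g) := by
  set c := √g
  have hc : 0 < c := sqrt_pos.2 hg
  -- `x = c * exp t` turns `x + g / x` into `2 * c * cosh t`
  have hshift : ∀ t, exp (t + log c) * exp (-(exp (t + log c) + g / exp (t + log c)))
      = exp t * (c * exp (-(2 * c) * cosh t)) := by
    intro t
    have hdiv : g / (exp t * c) = c * exp (-t) := by
      have hcc : c * c = g := mul_self_sqrt hg.le
      rw [exp_neg, ← hcc]
      field_simp
    rw [exp_add, exp_log hc, hdiv, cosh_eq]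
    ring_nf
  have hint : Integrable fun t ↦ exp t * (c * exp (-(2 * c) * cosh t)) := by
    simpa only [hshift, smul_eq_mul] using
      ((integrable_comp_exp_iff _).2 (integrableOn_exp_neg_add_div hg.le)).comp_add_right (log c)
  calc ∫ x in Ioi 0, exp (-(x + g / x))
      = ∫ t, exp t * exp (-(exp t + g / exp t)) := (integral_comp_exp _).symm
    _ = ∫ t, exp (t + log c) * exp (-(exp (t + log c) + g / exp (t + log c))) :=
      (integral_add_right_eq_self _ _).symm
    _ = ∫ t, exp t * (c * exp (-(2 * c) * cosh t)) := by simp_rw [hshift]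
    _ = 2 * ∫ t in Ioi 0, cosh t * (c * exp (-(2 * c) * cosh t)) :=
      integral_exp_mul_of_even (fun t ↦ by rw [cosh_neg]) hint
    _ = 2 * c * besselK1 (2 * c) := by
      rw [besselK1, mul_assoc, ← integral_const_mul c]
      congr 1
      exact setIntegral_congr_fun measurableSet_Ioi fun t _ ↦ by ring

open scoped ENNReal

theorem ProbabilityTheory.IndepFun.measure_preimage_prodMk {Ω β β' : Type*} [MeasurableSpace Ω]
    [MeasurableSpace β] [MeasurableSpace β'] {μ : Measure Ω} [IsFiniteMeasure μ]
    {X : Ω → β} {Y : Ω → β'} (hXY : IndepFun X Y μ) (hX : AEMeasurable X μ)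
    (hY : AEMeasurable Y μ) {s : Set (β × β')} (hs : MeasurableSet s) :
    μ ((fun ω ↦ (X ω, Y ω)) ⁻¹' s) = (μ.map X).prod (μ.map Y) s := by
  rw [← hXY.map_prod_eq_prod_map_map hX hY, Measure.map_apply_of_aemeasurable (hX.prodMk hY) hs]

theorem ProbabilityTheory.expMeasure_Ioi {r c : ℝ} (hr : 0 < r) (hc : 0 ≤ c) :
    expMeasure r (Ioi c) = ENNReal.ofReal (exp (-(r * c))) := by
  have := isProbabilityMeasure_expMeasure hr
  have hle : exp (-(r * c)) ≤ 1 := exp_le_one_iff.2 (by nlinarith)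
  rw [← compl_Iic, prob_compl_eq_one_sub measurableSet_Iic, ← ofReal_cdf, cdf_expMeasure_eq hr,
    if_pos hc, ← ENNReal.ofReal_one, ← ENNReal.ofReal_sub _ (by linarith), sub_sub_cancel]

theorem ProbabilityTheory.lintegral_expMeasure (r : ℝ) {f : ℝ → ℝ≥0∞} (hf : Measurable f) :
    ∫⁻ x, f x ∂expMeasure r = ∫⁻ x in Ioi 0, ENNReal.ofReal (r * exp (-(r * x))) * f x := by
  have hsupp : (exponentialPDF r * f).support ⊆ Ici 0 := fun x hx ↦ by
    contrapose! hx
    simp [exponentialPDF_of_neg (not_le.1 hx)]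
  have hdensity : expMeasure r = volume.withDensity (exponentialPDF r) := rfl
  rw [hdensity, lintegral_withDensity_eq_lintegral_mul _
    (f := exponentialPDF r) (measurable_exponentialPDFReal r).ennreal_ofReal hf,
    ← setLIntegral_eq_of_support_subset hsupp, setLIntegral_congr Ioi_ae_eq_Ici.symm]
  exact setLIntegral_congr_fun measurableSet_Ioi fun x hx ↦ by
    rw [Pi.mul_apply, exponentialPDF_of_nonneg (le_of_lt hx)]

theorem expMeasure_prod_lt_mul {g : ℝ} (hg : 0 ≤ g) :
    (expMeasure 1).prod (expMeasure 1) {p | g < p.1 * p.2}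
      = ENNReal.ofReal (∫ x in Ioi 0, exp (-(x + g / x))) := by
  have := isProbabilityMeasure_expMeasure one_pos
  have hS : MeasurableSet {p : ℝ × ℝ | g < p.1 * p.2} := measurableSet_lt (by fun_prop) (by fun_prop)
  rw [Measure.prod_apply hS, lintegral_expMeasure _ (measurable_measure_prodMk_left hS),
    ofReal_integral_eq_lintegral_ofReal (integrableOn_exp_neg_add_div hg)
      (.of_forall fun _ ↦ (exp_pos _).le)]
  refine setLIntegral_congr_fun measurableSet_Ioi fun x (hx : 0 < x) ↦ ?_
  have hsection : Prod.mk x ⁻¹' {p : ℝ × ℝ | g < p.1 * p.2} = Ioi (g / x) := by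
    ext y
    exact (div_lt_iff₀' hx).symm
  rw [hsection, expMeasure_Ioi one_pos (div_nonneg hg hx.le), ← ENNReal.ofReal_mul (by positivity)]
  congr 1
  rw [one_mul, one_mul, one_mul, ← exp_add, neg_add]

theorem stmt_1 {Ω : Type*} [MeasurableSpace Ω] (μ : Measure Ω) [IsProbabilityMeasure μ]
    (X Y : Ω → ℝ) (hXY : IndepFun X Y μ)
    (hX : Measure.map X μ = expMeasure 1) (hY : Measure.map Y μ = expMeasure 1)
    (g : ℝ) (hg : 0 < g) :
    (μ {ω | X ω * Y ω ≤ g}).toReal =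
      1 - 2 * Real.sqrt g * besselK1 (2 * Real.sqrt g) := by
  have := isProbabilityMeasure_expMeasure one_pos
  have hXm : AEMeasurable X μ := .of_map_ne_zero (hX ▸ IsProbabilityMeasure.ne_zero _)
  have hYm : AEMeasurable Y μ := .of_map_ne_zero (hY ▸ IsProbabilityMeasure.ne_zero _)
  set S := {p : ℝ × ℝ | g < p.1 * p.2}
  have hS : MeasurableSet S := measurableSet_lt (by fun_prop) (by fun_prop)
  have hpre : {ω | X ω * Y ω ≤ g} = (fun ω ↦ (X ω, Y ω)) ⁻¹' Sᶜ := by ext; simp [S]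
  calc (μ {ω | X ω * Y ω ≤ g}).toReal = ((expMeasure 1).prod (expMeasure 1)).real Sᶜ := by
        rw [hpre, hXY.measure_preimage_prodMk hXm hYm hS.compl, hX, hY, measureReal_def]
    _ = 1 - ((expMeasure 1).prod (expMeasure 1)).real S := probReal_compl_eq_one_sub hS
    _ = 1 - ∫ x in Ioi 0, exp (-(x + g / x)) := by
        rw [measureReal_def, expMeasure_prod_lt_mul hg.le, ENNReal.toReal_ofReal
          (setIntegral_nonneg measurableSet_Ioi fun _ _ ↦ (exp_pos _).le)]
    _ = 1 - 2 * √g * besselK1 (2 * √g) := by rw [integral_exp_neg_add_div hg]
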